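/- With c*_i(α,x) = (2^i/i!) ∑_{k=0}^{i-2} C(α+1, i-k-2) C(i-2α-5, k) ((1-x)/2)^k for i ≥ 2 and c*_1 = 0, one has ∑_{i=1}^{∞} c*_i(α,-1) = 2·₁F₁(-α-1; 3; 2) = 2 ∑_{m=0}^{∞} (-α-1)_m 2^m / (m! (3)_m). -/

import Mathlib

open Finset Real

/-- Rising factorial (Pochhammer symbol) `(a)_m`. -/
noncomputable def poch (a : ℝ) (m : ℕ) : ℝ := (ascPochhammer ℝ m).eval a

/-- Generalized binomial coefficient `C(a,b) = (a-b+1)_b / b!`. -/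
noncomputable def gbinom (a : ℝ) (b : ℕ) : ℝ := poch (a - b + 1) b / (Nat.factorial b : ℝ)

/-- Classical Laguerre polynomial `L_n^{(α)}(x)`. -/
noncomputable def lag (α : ℝ) (n : ℕ) (x : ℝ) : ℝ :=
  ∑ k ∈ Finset.range (n + 1),
    ((-1 : ℝ) ^ k / (Nat.factorial k : ℝ)) * gbinom ((n : ℝ) + α) (n - k) * x ^ k

/-- The coefficients `c*_i(α,x)` (the defining sum is empty for i ≤ 1, so `c*_1 = 0`). -/
noncomputable def cstar (α : ℝ) (i : ℕ) (x : ℝ) : ℝ :=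
  ((2 : ℝ) ^ i / (Nat.factorial i : ℝ)) * ∑ k ∈ Finset.range (i - 1),
    gbinom (α + 1) (i - k - 2) * gbinom ((i : ℝ) - 2 * α - 5) k * ((1 - x) / 2) ^ k

/-! At `x = -1` the weight `((1 - x) / 2) ^ k` is `1`, so the inner sum of `c*_{j+2}` is a
Chu–Vandermonde convolution and collapses to `C(j - α - 2, j) = (-α - 1)_j / j!`. Since
`(3)_j = (j + 2)! / 2`, this makes `c*_{j+2}(α, -1)` exactly twice the `j`-th term of
`₁F₁(-α - 1; 3; 2)`. For `α ∈ ℕ` both series terminate, so after discarding `c*_1 = 0` the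
identity holds termwise. -/

open scoped Nat

lemma gbinom_eq_ringChoose (a : ℝ) (b : ℕ) : gbinom a b = Ring.choose a b := by
  rw [Ring.choose_eq_smul, Polynomial.descPochhammer_smeval_eq_ascPochhammer,
    Polynomial.ascPochhammer_smeval_eq_eval, smul_eq_mul, gbinom, poch, div_eq_inv_mul]

lemma gbinom_add_eq (a b : ℝ) (j : ℕ) :
    gbinom (a + b) j = ∑ k ∈ range (j + 1), gbinom a (j - k) * gbinom b k := by
  simp only [gbinom_eq_ringChoose]
  rw [add_comm a b, Ring.add_choose_eq j (Commute.all b a),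
    Nat.sum_antidiagonal_eq_sum_range_succ fun k l => Ring.choose b k * Ring.choose a l]
  exact sum_congr rfl fun k _ => mul_comm _ _

lemma poch_neg_natCast_eq_zero {n m : ℕ} (h : n < m) : poch (-(n : ℝ)) m = 0 :=
  ascPochhammer_eval_neg_coe_nat_of_lt h

lemma poch_three_eq_factorial (m : ℕ) : poch 3 m = (m + 2)! / 2 := by
  have h := factorial_mul_ascPochhammer ℝ 2 m
  rw [add_comm 2 m] at h
  rw [poch, ← h]
  norm_num

lemma cstar_one (α x : ℝ) : cstar α 1 x = 0 := by
  simp [cstar]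

lemma cstar_add_two_neg_one_eq_poch (α : ℝ) (j : ℕ) :
    cstar α (j + 2) (-1) = 2 ^ (j + 2) / (j + 2)! * (poch (-α - 1) j / j !) := by
  have hv := gbinom_add_eq (α + 1) (((j + 2 : ℕ) : ℝ) - 2 * α - 5) j
  rw [cstar, show j + 2 - 1 = j + 1 from rfl]
  congr 1
  calc _ = ∑ k ∈ range (j + 1),
        gbinom (α + 1) (j - k) * gbinom (((j + 2 : ℕ) : ℝ) - 2 * α - 5) k := by
        refine sum_congr rfl fun k _ => ?_
        rw [show j + 2 - k - 2 = j - k by omega]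
        norm_num
    _ = _ := by
        rw [← hv, gbinom]
        congr 2
        push_cast
        ring

lemma cstar_add_two_neg_one_eq_two_mul (α : ℝ) (m : ℕ) :
    cstar α (m + 2) (-1) = 2 * (poch (-α - 1) m * 2 ^ m / (m ! * poch 3 m)) := by
  rw [cstar_add_two_neg_one_eq_poch, poch_three_eq_factorial]
  field_simp
  ring

/-- `∑_{i=1}^∞ c*_i(α,-1) = 2 ₁F₁(-α-1;3;2)` for nonnegative integer α. -/
theorem statement8 (α : ℕ) :
    ∑' i : ℕ, cstar (α : ℝ) (i + 1) (-1)
      = 2 * ∑' m : ℕ, poch (-(α : ℝ) - 1) m * 2 ^ m / ((Nat.factorial m : ℝ) * poch 3 m) := by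
  set F : ℕ → ℝ := fun m => poch (-(α : ℝ) - 1) m * 2 ^ m / ((Nat.factorial m : ℝ) * poch 3 m)
  have hF : ∀ m ∉ range (α + 2), F m = 0 := fun m hm => by
    have h : -(α : ℝ) - 1 = -((α + 1 : ℕ) : ℝ) := by push_cast; ring
    have hm : α + 1 < m := by simp only [mem_range, not_lt] at hm; omega
    simp only [F, h, poch_neg_natCast_eq_zero hm, zero_mul, zero_div]
  have hshift : ∀ m, cstar α (m + 1 + 1) (-1) = 2 * F m := cstar_add_two_neg_one_eq_two_mul α
  have hsum : Summable fun i => cstar α (i + 1) (-1) :=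
    (summable_nat_add_iff 1).mp <| by
      simpa only [hshift] using (summable_of_ne_finset_zero hF).mul_left 2
  rw [hsum.tsum_eq_zero_add, zero_add, cstar_one, zero_add]
  simp only [hshift, tsum_mul_left]
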